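/- arXiv:2212.13649 — 3 statements merged into one kernel-verified Lean document; each statement's English description precedes it below -/
import Mathlib

section
/- Assume there exists a state s with E(s) ≥ 1. Then the smallest eigenvalue of H(z) is strictly increasing in z on [0, ∞): for all 0 ≤ z < z', λ_min(H(z)) < λ_min(H(z')). -/
open Matrix in
lemma rayleigh_key {N : ℕ} {A : Matrix (Fin N) (Fin N) ℂ} (hA : A.IsHermitian)
    (v : Fin N → ℂ) :
    (star v ⬝ᵥ A *ᵥ v) = ∑ j, (hA.eigenvalues j : ℂ) *
      Complex.normSq ((star (hA.eigenvectorUnitary : Matrix (Fin N) (Fin N) ℂ) *ᵥ v) j) := by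
  set U : Matrix (Fin N) (Fin N) ℂ := ↑hA.eigenvectorUnitary with hU
  set w : Fin N → ℂ := star U *ᵥ v with hw
  have hsw : star v ᵥ* U = star w := by
    rw [hw, star_mulVec]
    simp [Matrix.star_eq_conjTranspose]
  conv_lhs => rw [hA.spectral_theorem, Unitary.conjStarAlgAut_apply]
  rw [← hU, ← mulVec_mulVec, ← mulVec_mulVec, dotProduct_mulVec (star v), hsw, ← hw]
  simp only [dotProduct, mulVec_diagonal, Function.comp_apply, Pi.star_apply,
    Complex.star_def]
  refine Finset.sum_congr rfl fun j _ => ?_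
  rw [mul_comm, mul_assoc, Complex.mul_conj]
  rfl

open Matrix in
lemma norm_key {N : ℕ} {A : Matrix (Fin N) (Fin N) ℂ} (hA : A.IsHermitian)
    (v : Fin N → ℂ) :
    ∑ j, Complex.normSq ((star (hA.eigenvectorUnitary : Matrix (Fin N) (Fin N) ℂ) *ᵥ v) j)
      = ∑ j, Complex.normSq (v j) := by
  set U : Matrix (Fin N) (Fin N) ℂ := ↑hA.eigenvectorUnitary with hU
  set w : Fin N → ℂ := star U *ᵥ v with hw
  have hsw : star v ᵥ* U = star w := by
    rw [hw, star_mulVec]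
    simp [Matrix.star_eq_conjTranspose]
  have h1 : star w ⬝ᵥ w = star v ⬝ᵥ v := by
    rw [← hsw, hw, dotProduct_mulVec, vecMul_vecMul,
      (Matrix.mem_unitaryGroup_iff).mp hA.eigenvectorUnitary.2, vecMul_one]
  have h2 : ∀ u : Fin N → ℂ, star u ⬝ᵥ u = ((∑ j, Complex.normSq (u j) : ℝ) : ℂ) := by
    intro u
    simp [dotProduct, Complex.star_def]
    refine Finset.sum_congr rfl fun j _ => ?_
    rw [← Complex.mul_conj]; ring
  have := (h2 w).symm.trans (h1.trans (h2 v))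
  exact_mod_cast this

open Matrix in
lemma rayleigh_ge {N : ℕ} [NeZero N] {A : Matrix (Fin N) (Fin N) ℂ} (hA : A.IsHermitian)
    (v : Fin N → ℂ) (hv : ∑ j, Complex.normSq (v j) = 1) :
    (⨅ i, hA.eigenvalues i) ≤ (star v ⬝ᵥ A *ᵥ v).re := by
  set w : Fin N → ℂ := star (hA.eigenvectorUnitary : Matrix (Fin N) (Fin N) ℂ) *ᵥ v with hw
  have hkey := rayleigh_key hA v
  have hre : (star v ⬝ᵥ A *ᵥ v).re = ∑ j, hA.eigenvalues j * Complex.normSq (w j) := by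
    rw [hkey, Complex.re_sum]
    refine Finset.sum_congr rfl fun j _ => ?_
    rw [show (hA.eigenvalues j : ℂ) * (Complex.normSq (w j) : ℂ)
        = ((hA.eigenvalues j * Complex.normSq (w j) : ℝ) : ℂ) by push_cast; rfl]
    exact Complex.ofReal_re _
  rw [hre]
  have hbdd : BddBelow (Set.range hA.eigenvalues) := Set.Finite.bddBelow (Set.finite_range _)
  calc (⨅ i, hA.eigenvalues i) = ∑ j, (⨅ i, hA.eigenvalues i) * Complex.normSq (w j) := by
        rw [← Finset.mul_sum, norm_key hA v, hv, mul_one]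
    _ ≤ ∑ j, hA.eigenvalues j * Complex.normSq (w j) := by
        refine Finset.sum_le_sum fun j _ => ?_
        exact mul_le_mul_of_nonneg_right (ciInf_le hbdd j) (Complex.normSq_nonneg _)

open Matrix in
lemma unit_basis {N : ℕ} {A : Matrix (Fin N) (Fin N) ℂ} (hA : A.IsHermitian) (i : Fin N) :
    ∑ j, Complex.normSq (hA.eigenvectorBasis i j) = 1 := by
  have h := hA.eigenvectorBasis.orthonormal.1 i
  have h2 : (inner ℂ (hA.eigenvectorBasis i) (hA.eigenvectorBasis i) : ℂ) = 1 := by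
    rw [inner_self_eq_norm_sq_to_K, h]; norm_num
  rw [EuclideanSpace.inner_eq_star_dotProduct, dotProduct_comm] at h2
  have h3 : ∀ u : Fin N → ℂ, star u ⬝ᵥ u = ((∑ j, Complex.normSq (u j) : ℝ) : ℂ) := by
    intro u
    simp [dotProduct, Complex.star_def]
    refine Finset.sum_congr rfl fun j _ => ?_
    rw [← Complex.mul_conj]; ring
  rw [h3] at h2
  exact_mod_cast h2

/-- The annealing Hamiltonian `H(z) = z·D − |φ⟩⟨φ|`. -/
noncomputable def Ham (N : ℕ) (E : Fin N → ℕ) (z : ℝ) : Matrix (Fin N) (Fin N) ℂ :=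
  fun s s' => (if s = s' then ((z * (E s : ℝ) : ℝ) : ℂ) else 0) - 1 / (N : ℂ)

open Matrix in
lemma Ham_mulVec (N : ℕ) (E : Fin N → ℕ) (z' : ℝ) (u : Fin N → ℂ) (s : Fin N) :
    (Ham N E z' *ᵥ u) s = ((z' * E s : ℝ) : ℂ) * u s - (1 / N) * ∑ t, u t := by
  simp [Ham, mulVec, dotProduct, sub_mul, Finset.sum_sub_distrib, Finset.mul_sum]

open Matrix in
lemma Ham_sub (N : ℕ) (E : Fin N → ℕ) (z z' : ℝ) :
    Ham N E z - Ham N E z' = Matrix.diagonal (fun s => (((z - z') * E s : ℝ) : ℂ)) := by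
  ext s t
  by_cases h : s = t <;> simp [Ham, Matrix.diagonal_apply, h] <;> push_cast <;> ring

open Matrix in
lemma diag_rayleigh (N : ℕ) (d : Fin N → ℂ) (u : Fin N → ℂ) :
    star u ⬝ᵥ Matrix.diagonal d *ᵥ u = ∑ s, d s * Complex.normSq (u s) := by
  simp only [dotProduct, mulVec_diagonal, Pi.star_apply, Complex.star_def]
  refine Finset.sum_congr rfl fun j _ => ?_
  rw [mul_comm, mul_assoc, Complex.mul_conj]

open Matrix in
/-- if some state has `E(s) ≥ 1`, then the smallest eigenvalue of `H(z)`
is strictly increasing in `z` on `[0, ∞)`. -/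
theorem stmt_12 (N : ℕ) (hN : 1 ≤ N) (E : Fin N → ℕ) (hE : ∃ s : Fin N, 1 ≤ E s)
    (hH : ∀ z : ℝ, (Ham N E z).IsHermitian)
    (z z' : ℝ) (hz : 0 ≤ z) (hzz : z < z') :
    (⨅ i : Fin N, (hH z).eigenvalues i) < ⨅ i : Fin N, (hH z').eigenvalues i := by
  have : NeZero N := ⟨by omega⟩
  have hNC : (N : ℂ) ≠ 0 := Nat.cast_ne_zero.mpr (by omega)
  obtain ⟨i0, hi0⟩ := exists_eq_ciInf_of_finite (f := (hH z').eigenvalues)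
  set u : Fin N → ℂ := ⇑((hH z').eigenvectorBasis i0) with hu
  set lam := (hH z').eigenvalues i0 with hlam
  have hunit : ∑ j, Complex.normSq (u j) = 1 := unit_basis (hH z') i0
  have hlam_eq : (star u ⬝ᵥ Ham N E z' *ᵥ u).re = lam :=
    ((hH z').eigenvalues_eq i0).symm
  set S := ∑ s, (E s : ℝ) * Complex.normSq (u s) with hS
  have hdiffre : (star u ⬝ᵥ Ham N E z *ᵥ u).re = lam - (z' - z) * S := by
    have hd : (star u ⬝ᵥ Ham N E z *ᵥ u) - (star u ⬝ᵥ Ham N E z' *ᵥ u)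
        = (((z - z') * S : ℝ) : ℂ) := by
      rw [← dotProduct_sub, ← sub_mulVec, Ham_sub, diag_rayleigh]
      rw [hS]
      push_cast [Finset.mul_sum]
      exact Finset.sum_congr rfl fun s _ => by ring
    have := congrArg Complex.re hd
    rw [Complex.sub_re, Complex.ofReal_re, hlam_eq] at this
    linarith
  have hSnonneg : 0 ≤ S :=
    Finset.sum_nonneg fun s _ => mul_nonneg (Nat.cast_nonneg _) (Complex.normSq_nonneg _)
  have hSpos : 0 < S := by
    rcases lt_or_eq_of_le hSnonneg with h | h
    · exact h
    exfalso
    -- S = 0: eigenvector vanishes on states with positive energy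
    have hzero : ∀ s : Fin N, 1 ≤ E s → u s = 0 := by
      intro s hs
      have hterm := (Finset.sum_eq_zero_iff_of_nonneg
        (fun t _ => mul_nonneg (Nat.cast_nonneg (E t)) (Complex.normSq_nonneg (u t)))).mp
        h.symm s (Finset.mem_univ s)
      have hEne : (E s : ℝ) ≠ 0 := by positivity
      have : Complex.normSq (u s) = 0 := by
        rcases mul_eq_zero.mp hterm with h' | h'
        · exact absurd h' hEne
        · exact h'
      exact Complex.normSq_eq_zero.mp this
    have heig : ∀ s, ((z' * E s : ℝ) : ℂ) * u s - (1 / N) * ∑ t, u t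
        = ((lam : ℝ) : ℂ) * u s := by
      intro s
      have := congrFun ((hH z').mulVec_eigenvectorBasis i0) s
      rw [Ham_mulVec] at this
      rw [this, Pi.smul_apply, Complex.real_smul]
    obtain ⟨s0, hs0⟩ := hE
    have hT : (∑ t, u t) = 0 := by
      have h0 := heig s0
      rw [hzero s0 hs0, mul_zero, mul_zero, zero_sub, neg_eq_zero] at h0
      have : (1 / (N : ℂ)) ≠ 0 := by
        simp [hNC]
      exact (mul_eq_zero.mp h0).resolve_left this
    have heig2 : ∀ s, ((z' * E s : ℝ) : ℂ) * u s = ((lam : ℝ) : ℂ) * u s := by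
      intro s
      have := heig s
      rwa [hT, mul_zero, sub_zero] at this
    obtain ⟨s1, hs1⟩ : ∃ s, u s ≠ 0 := by
      by_contra hall
      push_neg at hall
      rw [Finset.sum_congr rfl (fun s _ => by rw [hall s, Complex.normSq_zero])] at hunit
      simp at hunit
    have hEs1 : E s1 = 0 := by
      by_contra hne
      exact hs1 (hzero s1 (by omega))
    have hlam0 : lam = 0 := by
      have := heig2 s1
      rw [hEs1] at this
      simp at this
      rcases this with h' | h'
      · exact_mod_cast h'
      · exact absurd h' hs1
    -- but Rayleigh quotient at basis vector s1 is -1/N < 0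
    set e : Fin N → ℂ := Pi.single s1 1 with he
    have hunite : ∑ j, Complex.normSq (e j) = 1 := by
      rw [he]
      rw [Finset.sum_eq_single s1]
      · simp
      · intro b _ hb; simp [Pi.single_apply, hb]
      · intro hb; exact absurd (Finset.mem_univ s1) hb
    have hray := rayleigh_ge (hH z') e hunite
    have hcomp : star e ⬝ᵥ Ham N E z' *ᵥ e = -(1 / (N : ℂ)) := by
      have h1 : ∀ s, (Ham N E z' *ᵥ e) s
          = ((z' * E s : ℝ) : ℂ) * e s - (1 / N) * 1 := by
        intro s
        rw [Ham_mulVec]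
        congr 1
        congr 1
        rw [he, Finset.sum_eq_single s1]
        · simp
        · intro b _ hb; simp [Pi.single_apply, hb]
        · intro hb; exact absurd (Finset.mem_univ s1) hb
      rw [dotProduct, Finset.sum_eq_single s1]
      · rw [h1 s1, he]
        simp [hEs1]
      · intro b _ hb
        rw [he]
        simp [Pi.single_apply, hb]
      · intro hb; exact absurd (Finset.mem_univ s1) hb
    rw [hcomp] at hray
    rw [← hi0, hlam0] at hray
    have : (-(1 / (N : ℂ))).re = -(1 / (N : ℝ)) := by
      simp
    rw [this] at hray
    have hNpos : (0 : ℝ) < 1 / N := by positivity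
    linarith
  have hle : (⨅ i : Fin N, (hH z).eigenvalues i) ≤ lam - (z' - z) * S := by
    rw [← hdiffre]
    exact rayleigh_ge (hH z) u hunit
  have : lam - (z' - z) * S < lam := by nlinarith
  calc (⨅ i : Fin N, (hH z).eigenvalues i) ≤ lam - (z' - z) * S := hle
    _ < lam := this
    _ = ⨅ i : Fin N, (hH z').eigenvalues i := hi0
end

section
/- Assume N0 := #{s : E(s) = 0} ≥ 1. Then for every z > 0 the second smallest eigenvalue (with multiplicity) λ1 of H(z) satisfies λ1 ≥ 0; consequently, for all 0 < z ≤ z', the spectral gap g(z) := λ1(H(z)) − λ0(H(z)) satisfies g(z) ≥ −λ0(H(z')), where λ0 denotes the smallest eigenvalue. -/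
/-- The eigenvalues of `H(z)` listed in nondecreasing order with multiplicity. -/
noncomputable def sortedEig {N : ℕ} {E : Fin N → ℕ} {z : ℝ}
    (hH : (Ham N E z).IsHermitian) : Fin N → ℝ :=
  hH.eigenvalues ∘ Tuple.sort hH.eigenvalues

open Matrix

lemma ham_mulVec (N : ℕ) (E : Fin N → ℕ) (z : ℝ) (x : Fin N → ℂ) :
    Ham N E z *ᵥ x = fun s => ((z * E s : ℝ) : ℂ) * x s - (∑ s', x s') / N := by
  funext s
  simp only [Ham, mulVec, dotProduct, sub_mul, Finset.sum_sub_distrib, ite_mul, zero_mul,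
    Finset.sum_ite_eq, Finset.mem_univ, if_true]
  congr 1
  rw [Finset.sum_div]
  exact Finset.sum_congr rfl fun s' _ => by ring

lemma ham_quad (N : ℕ) (E : Fin N → ℕ) (z : ℝ) (x : Fin N → ℂ) :
    star x ⬝ᵥ (Ham N E z *ᵥ x)
      = ((z * ∑ s, (E s : ℝ) * Complex.normSq (x s) : ℝ) : ℂ)
        - ((Complex.normSq (∑ s, x s) : ℝ) : ℂ) / N := by
  rw [ham_mulVec]
  simp only [dotProduct, Pi.star_apply, RCLike.star_def, mul_sub, Finset.sum_sub_distrib]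
  congr 1
  · push_cast
    rw [Finset.mul_sum]
    refine Finset.sum_congr rfl fun s _ => ?_
    rw [show (starRingEnd ℂ) (x s) * (((z : ℂ) * (E s : ℂ)) * x s)
        = ((z : ℂ) * (E s : ℂ)) * ((starRingEnd ℂ) (x s) * x s) by ring,
      Complex.normSq_eq_conj_mul_self]
    ring
  · rw [← Finset.sum_mul, ← map_sum, Complex.normSq_eq_conj_mul_self, mul_div_assoc]

lemma basis_dot {N : ℕ} {A : Matrix (Fin N) (Fin N) ℂ} (hA : A.IsHermitian) (i j : Fin N) :
    star ⇑(hA.eigenvectorBasis i) ⬝ᵥ ⇑(hA.eigenvectorBasis j) = if i = j then 1 else 0 := by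
  have h := orthonormal_iff_ite.mp hA.eigenvectorBasis.orthonormal i j
  rwa [EuclideanSpace.inner_eq_star_dotProduct, dotProduct_comm] at h

lemma mulVec_basis {N : ℕ} {A : Matrix (Fin N) (Fin N) ℂ} (hA : A.IsHermitian) (j : Fin N) :
    A *ᵥ ⇑(hA.eigenvectorBasis j) = ((hA.eigenvalues j : ℝ) : ℂ) • ⇑(hA.eigenvectorBasis j) := by
  rw [hA.mulVec_eigenvectorBasis]
  funext s
  simp [Complex.real_smul]

lemma rayleigh_le {N : ℕ} {A : Matrix (Fin N) (Fin N) ℂ} (hA : A.IsHermitian)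
    {c : ℝ} (hc : ∀ i, c ≤ hA.eigenvalues i) {v : Fin N → ℂ}
    (hv : star v ⬝ᵥ v = 1) : c ≤ (star v ⬝ᵥ (A *ᵥ v)).re := by
  have hUU : (hA.eigenvectorUnitary : Matrix (Fin N) (Fin N) ℂ)
      * star (hA.eigenvectorUnitary : Matrix (Fin N) (Fin N) ℂ) = 1 :=
    mem_unitaryGroup_iff.mp hA.eigenvectorUnitary.2
  have hsw : star v ᵥ* (hA.eigenvectorUnitary : Matrix (Fin N) (Fin N) ℂ)
      = star ((star (hA.eigenvectorUnitary : Matrix (Fin N) (Fin N) ℂ)) *ᵥ v) := by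
    rw [star_mulVec, ← Matrix.star_eq_conjTranspose, star_star]
  set w : Fin N → ℂ := (star (hA.eigenvectorUnitary : Matrix (Fin N) (Fin N) ℂ)) *ᵥ v with hwdef
  have key : star v ⬝ᵥ (A *ᵥ v) = ∑ k, (hA.eigenvalues k : ℂ) * ((starRingEnd ℂ) (w k) * w k) := by
    conv_lhs => rw [hA.spectral_theorem, Unitary.conjStarAlgAut_apply]
    rw [← mulVec_mulVec, dotProduct_mulVec, ← vecMul_vecMul, hsw]
    simp only [dotProduct, vecMul_diagonal, Pi.star_apply, RCLike.star_def, Function.comp]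
    exact Finset.sum_congr rfl fun k _ => (mul_assoc _ _ _).trans (mul_left_comm _ _ _)
  have hww : star w ⬝ᵥ w = 1 := by
    rw [hwdef, ← hsw, ← dotProduct_mulVec, mulVec_mulVec, hUU, one_mulVec, hv]
  have hw1 : ∑ k, Complex.normSq (w k) = 1 := by
    have := congrArg Complex.re hww
    simpa [dotProduct, ← Complex.normSq_eq_conj_mul_self, Complex.re_sum] using this
  have hre : (star v ⬝ᵥ (A *ᵥ v)).re = ∑ k, hA.eigenvalues k * Complex.normSq (w k) := by
    rw [key, Complex.re_sum]
    refine Finset.sum_congr rfl fun k _ => ?_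
    rw [show ((starRingEnd ℂ) (w k) * w k) = ((Complex.normSq (w k) : ℝ) : ℂ) by
      rw [Complex.normSq_eq_conj_mul_self]]
    simp
  rw [hre]
  calc c = ∑ k, c * Complex.normSq (w k) := by rw [← Finset.mul_sum, hw1, mul_one]
    _ ≤ ∑ k, hA.eigenvalues k * Complex.normSq (w k) :=
      Finset.sum_le_sum fun k _ => mul_le_mul_of_nonneg_right (hc k) (Complex.normSq_nonneg _)

/-- if there is at least one optimal solution (`N0 ≥ 1`), then for every
`z > 0` the second smallest eigenvalue `λ1` of `H(z)` is `≥ 0`; consequently, for all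
`0 < z ≤ z'` the spectral gap satisfies `g(z) = λ1(z) − λ0(z) ≥ −λ0(z')`. -/
theorem stmt_13 (N : ℕ) (hN : 2 ≤ N) (E : Fin N → ℕ)
    (hN0 : 1 ≤ (Finset.univ.filter fun s : Fin N => E s = 0).card)
    (hH : ∀ z : ℝ, (Ham N E z).IsHermitian) :
    (∀ z : ℝ, 0 < z → 0 ≤ sortedEig (hH z) ⟨1, by omega⟩) ∧
    (∀ z z' : ℝ, 0 < z → z ≤ z' →
      -(sortedEig (hH z') ⟨0, by omega⟩) ≤
        sortedEig (hH z) ⟨1, by omega⟩ - sortedEig (hH z) ⟨0, by omega⟩) := by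
  have key1 : ∀ z : ℝ, 0 < z → 0 ≤ sortedEig (hH z) ⟨1, by omega⟩ := by
    intro z hz
    by_contra hneg
    push_neg at hneg
    have hmono := Tuple.monotone_sort (hH z).eigenvalues
      (show (⟨0, by omega⟩ : Fin N) ≤ ⟨1, by omega⟩ by simp [Fin.le_def])
    set i := Tuple.sort (hH z).eigenvalues ⟨0, by omega⟩ with hi
    set j := Tuple.sort (hH z).eigenvalues ⟨1, by omega⟩ with hj
    have hij : i ≠ j := by
      intro h
      have := (Tuple.sort (hH z).eigenvalues).injective h
      simp [Fin.mk.injEq] at this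
    have hμj : (hH z).eigenvalues j < 0 := hneg
    have hμi : (hH z).eigenvalues i ≤ (hH z).eigenvalues j := hmono
    set v : Fin N → ℂ := ⇑((hH z).eigenvectorBasis i) with hv
    set w : Fin N → ℂ := ⇑((hH z).eigenvectorBasis j) with hw
    obtain ⟨a, b, hab, hsum⟩ : ∃ a b : ℂ, ¬(a = 0 ∧ b = 0)
        ∧ a * (∑ s, v s) + b * (∑ s, w s) = 0 := by
      by_cases hv0 : (∑ s, v s) = 0
      · exact ⟨1, 0, by simp, by simp [hv0]⟩
      · exact ⟨∑ s, w s, -(∑ s, v s), by simp [hv0], by ring⟩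
    set x : Fin N → ℂ := a • v + b • w with hx
    have hxs : ∀ s, x s = a * v s + b * w s := fun s => rfl
    have hxsum : (∑ s, x s) = 0 := by
      simp only [hxs, Finset.sum_add_distrib, ← Finset.mul_sum]
      exact hsum
    have hQ1 : star x ⬝ᵥ (Ham N E z *ᵥ x)
        = ((z * ∑ s, (E s : ℝ) * Complex.normSq (x s) : ℝ) : ℂ) := by
      rw [ham_quad, hxsum]
      simp
    have hHx : Ham N E z *ᵥ x = (a * (((hH z).eigenvalues i : ℝ) : ℂ)) • v
        + (b * (((hH z).eigenvalues j : ℝ) : ℂ)) • w := by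
      rw [hx, mulVec_add, mulVec_smul, mulVec_smul, hv, hw, mulVec_basis, mulVec_basis,
        smul_smul, smul_smul]
    have hQ2 : star x ⬝ᵥ (Ham N E z *ᵥ x)
        = (((hH z).eigenvalues i * Complex.normSq a
            + (hH z).eigenvalues j * Complex.normSq b : ℝ) : ℂ) := by
      rw [hHx, hx]
      simp only [star_add, star_smul, add_dotProduct, dotProduct_add, smul_dotProduct,
        dotProduct_smul, smul_eq_mul, hv, hw, basis_dot (hH z), hij, Ne.symm hij, eq_self_iff_true,
        if_true, if_false, mul_zero, mul_one, add_zero, zero_add, RCLike.star_def]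
      have key : ∀ (c : ℂ) (r : ℝ), c * (r : ℂ) * (starRingEnd ℂ) c
          = (r : ℂ) * ((Complex.normSq c : ℝ) : ℂ) := by
        intro c r
        rw [show c * (r : ℂ) * (starRingEnd ℂ) c
            = (r : ℂ) * ((starRingEnd ℂ) c * c) by ring, Complex.normSq_eq_conj_mul_self]
      rw [key, key]
      push_cast
      ring
    have heq : z * ∑ s, (E s : ℝ) * Complex.normSq (x s)
        = (hH z).eigenvalues i * Complex.normSq a + (hH z).eigenvalues j * Complex.normSq b := by
      have := hQ1.symm.trans hQ2
      exact_mod_cast this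
    have hpos : 0 ≤ z * ∑ s, (E s : ℝ) * Complex.normSq (x s) := by
      apply mul_nonneg hz.le
      exact Finset.sum_nonneg fun s _ => mul_nonneg (Nat.cast_nonneg _) (Complex.normSq_nonneg _)
    rw [not_and_or] at hab
    have hneg2 : (hH z).eigenvalues i * Complex.normSq a
        + (hH z).eigenvalues j * Complex.normSq b < 0 := by
      rcases hab with ha | hb
      · have h1 : (hH z).eigenvalues i * Complex.normSq a < 0 :=
          mul_neg_of_neg_of_pos (lt_of_le_of_lt hμi hμj) (Complex.normSq_pos.mpr ha)
        have h2 : (hH z).eigenvalues j * Complex.normSq b ≤ 0 :=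
          mul_nonpos_of_nonpos_of_nonneg hμj.le (Complex.normSq_nonneg _)
        linarith
      · have h1 : (hH z).eigenvalues j * Complex.normSq b < 0 :=
          mul_neg_of_neg_of_pos hμj (Complex.normSq_pos.mpr hb)
        have h2 : (hH z).eigenvalues i * Complex.normSq a ≤ 0 :=
          mul_nonpos_of_nonpos_of_nonneg (le_of_lt (lt_of_le_of_lt hμi hμj))
            (Complex.normSq_nonneg _)
        linarith
    linarith [heq ▸ hpos]
  refine ⟨key1, fun z z' hz hzz' => ?_⟩
  have h1 := key1 z hz
  have hmin : sortedEig (hH z) ⟨0, by omega⟩ ≤ sortedEig (hH z') ⟨0, by omega⟩ := by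
    set j := Tuple.sort (hH z').eigenvalues ⟨0, by omega⟩ with hj
    set v : Fin N → ℂ := ⇑((hH z').eigenvectorBasis j) with hv
    have hvv : star v ⬝ᵥ v = 1 := by simpa using basis_dot (hH z') j j
    have heig : star v ⬝ᵥ (Ham N E z' *ᵥ v) = (((hH z').eigenvalues j : ℝ) : ℂ) := by
      rw [mulVec_basis, dotProduct_smul, smul_eq_mul, hvv, mul_one]
    have hc : ∀ k, sortedEig (hH z) ⟨0, by omega⟩ ≤ (hH z).eigenvalues k := by
      intro k
      have hk : k = Tuple.sort (hH z).eigenvalues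
          ((Tuple.sort (hH z).eigenvalues).symm k) := by simp
      conv_rhs => rw [hk]
      exact Tuple.monotone_sort (hH z).eigenvalues (by simp [Fin.le_def])
    have h2 := rayleigh_le (hH z) hc hvv
    have h3 : (star v ⬝ᵥ (Ham N E z *ᵥ v)).re ≤ (star v ⬝ᵥ (Ham N E z' *ᵥ v)).re := by
      rw [ham_quad, ham_quad]
      have hT : 0 ≤ ∑ s, (E s : ℝ) * Complex.normSq (v s) :=
        Finset.sum_nonneg fun s _ => mul_nonneg (Nat.cast_nonneg _) (Complex.normSq_nonneg _)
      have hN' : ((N : ℂ)) = (((N : ℝ)) : ℂ) := by push_cast; rfl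
      rw [hN', ← Complex.ofReal_div, ← Complex.ofReal_sub, ← Complex.ofReal_sub,
        Complex.ofReal_re, Complex.ofReal_re]
      have := mul_le_mul_of_nonneg_right hzz' hT
      linarith
    have h4 : (star v ⬝ᵥ (Ham N E z' *ᵥ v)).re = (hH z').eigenvalues j := by
      rw [heig, Complex.ofReal_re]
    have h5 : sortedEig (hH z') ⟨0, by omega⟩ = (hH z').eigenvalues j := rfl
    rw [h5]
    linarith
  linarith
end

section
/- Fix assignments s, s' ∈ {−1,+1}^n that differ in exactly d coordinates, with 1 ≤ d ≤ n, and draw a random 3-SAT instance with m independent clauses. Set p1 := C(n−d,3)/C(n,3), p0 := (1 − p1)/7, and write B(x | M, q) := C(M,x)·q^x·(1−q)^(M−x). Then for all natural numbers k, k' with 0 ≤ k, k' ≤ m, the joint probability P(E(s) = k and E(s') = k') equals B(k | m, 1/8) · ∑_{x = max(k+k'−m, 0)}^{min(k, k')} B(x | k, p1) · B(k'−x | m−k, p0). -/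
/-- A random 3-SAT clause: a 3-element subset of the variables together with signs. -/
abbrev Clause (n : ℕ) := {S : Finset (Fin n) // S.card = 3} × (Fin n → Bool)

/-- A random 3-SAT instance: `m` independent clauses. -/
abbrev Inst (n m : ℕ) := Fin m → Clause n

/-- Clause `c` is violated by the assignment `s` iff `s` agrees with the signs on all
three variables of the clause. -/
abbrev violated {n : ℕ} (s : Fin n → Bool) (c : Clause n) : Prop :=
  ∀ i ∈ c.1.1, s i = c.2 i

/-- The energy `E(s)`: the number of violated clauses. -/
def energy {n m : ℕ} (s : Fin n → Bool) (ω : Inst n m) : ℕ :=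
  (Finset.univ.filter fun a => violated s (ω a)).card

/-- Uniform probability of an event on a finite sample space. -/
noncomputable def unifProb {α : Type*} [Fintype α] (p : α → Prop) [DecidablePred p] : ℝ :=
  ((Finset.univ.filter p).card : ℝ) / (Fintype.card α)

/-- The binomial probability `B(x | M, q) = C(M,x)·q^x·(1−q)^(M−x)`. -/
noncomputable def binomProb (x M : ℕ) (q : ℝ) : ℝ :=
  (M.choose x : ℝ) * q ^ x * (1 - q) ^ (M - x)

lemma count_fix {n : ℕ} (S : Finset (Fin n)) (t : Fin n → Bool) :
    (Finset.univ.filter fun J : Fin n → Bool => ∀ i ∈ S, t i = J i).card = 2 ^ (n - S.card) := by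
  have hset : (Finset.univ.filter fun J : Fin n → Bool => ∀ i ∈ S, t i = J i)
      = Fintype.piFinset (fun i => if i ∈ S then ({t i} : Finset Bool) else Finset.univ) := by
    ext J
    simp only [Finset.mem_filter, Finset.mem_univ, true_and, Fintype.mem_piFinset]
    constructor
    · intro h i
      by_cases hi : i ∈ S <;> simp [hi]
      exact (h i hi).symm
    · intro h i hi
      have := h i
      simp [hi] at this
      exact this.symm
  rw [hset, Fintype.card_piFinset]
  have : ∀ i : Fin n, (if i ∈ S then ({t i} : Finset Bool) else Finset.univ).card
      = if i ∈ S then 1 else 2 := by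
    intro i; split_ifs <;> simp
  simp only [this]
  rw [Finset.prod_ite]
  have h1 : (Finset.univ.filter fun i : Fin n => ¬ i ∈ S) = Sᶜ := by ext; simp
  simp [h1, Finset.card_compl]

section PerS
variable {n : ℕ} (s s' : Fin n → Bool)

/-- the per-clause type map -/
def gg (s s' : Fin n → Bool) (c : Clause n) : Bool × Bool :=
  (decide (violated s c), decide (violated s' c))

variable (S : Finset (Fin n)) (hS : S.card = 3)

-- counts of J's
lemma cP : (Finset.univ.filter fun J : Fin n → Bool => ∀ i ∈ S, s i = J i).card = 2 ^ (n - S.card) :=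
  count_fix S s

lemma cPQ_agree (h : ∀ i ∈ S, s i = s' i) :
    (Finset.univ.filter fun J : Fin n → Bool =>
      (∀ i ∈ S, s i = J i) ∧ (∀ i ∈ S, s' i = J i)).card = 2 ^ (n - S.card) := by
  have : (Finset.univ.filter fun J : Fin n → Bool =>
      (∀ i ∈ S, s i = J i) ∧ (∀ i ∈ S, s' i = J i))
      = Finset.univ.filter fun J : Fin n → Bool => ∀ i ∈ S, s i = J i := by
    ext J
    simp only [Finset.mem_filter, Finset.mem_univ, true_and, and_iff_left_iff_imp]
    exact fun hp i hi => (h i hi).symm.trans (hp i hi)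
  rw [this]
  exact count_fix S s

lemma cPQ_disagree (h : ¬ ∀ i ∈ S, s i = s' i) :
    (Finset.univ.filter fun J : Fin n → Bool =>
      (∀ i ∈ S, s i = J i) ∧ (∀ i ∈ S, s' i = J i)).card = 0 := by
  push_neg at h
  obtain ⟨i0, hi0, hne⟩ := h
  rw [Finset.card_eq_zero, Finset.filter_eq_empty_iff]
  rintro J - ⟨h1, h2⟩
  exact hne ((h1 i0 hi0).trans (h2 i0 hi0).symm)
end PerS

lemma quad {α : Type*} [Fintype α] (p q : α → Prop) [DecidablePred p] [DecidablePred q]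
    (cp cq cpq : ℕ)
    (hp : (Finset.univ.filter p).card = cp) (hq : (Finset.univ.filter q).card = cq)
    (hpq : (Finset.univ.filter fun a => p a ∧ q a).card = cpq)
    (hle : cp + cq ≤ Fintype.card α) (b : Bool × Bool) :
    (Finset.univ.filter fun a => (decide (p a), decide (q a)) = b).card =
      match b with
      | (true, true) => cpq
      | (true, false) => cp - cpq
      | (false, true) => cq - cpq
      | (false, false) => Fintype.card α - cp - cq + cpq := by
  have h1 := Finset.card_filter_add_card_filter_not (s := Finset.univ.filter p) (p := q)
  rw [Finset.filter_filter, Finset.filter_filter, hp] at h1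
  have h4 := Finset.card_filter_add_card_filter_not (s := Finset.univ.filter q) (p := p)
  rw [Finset.filter_filter, Finset.filter_filter, hq] at h4
  have h4' : (Finset.univ.filter fun a => q a ∧ p a).card = cpq := by
    rw [← hpq]; congr 1; ext a; simp [and_comm]
  have h3 := Finset.card_filter_add_card_filter_not (s := (Finset.univ : Finset α)) (p := p)
  rw [hp, Finset.card_univ] at h3
  have h2 := Finset.card_filter_add_card_filter_not
    (s := Finset.univ.filter fun a => ¬ p a) (p := q)
  rw [Finset.filter_filter, Finset.filter_filter] at h2
  have hqp : (Finset.univ.filter fun a => ¬p a ∧ q a).card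
      = (Finset.univ.filter fun a => q a ∧ ¬p a).card := by
    congr 1; ext a; simp [and_comm]
  rcases b with ⟨b1, b2⟩
  cases b1 <;> cases b2 <;> simp only []
  · have he : (Finset.univ.filter fun a =>
        ((decide (p a), decide (q a)) : Bool × Bool) = (false, false))
        = Finset.univ.filter fun a => ¬ p a ∧ ¬ q a := by
      ext a; simp [Prod.ext_iff]
    rw [he]; omega
  · have he : (Finset.univ.filter fun a =>
        ((decide (p a), decide (q a)) : Bool × Bool) = (false, true))
        = Finset.univ.filter fun a => ¬ p a ∧ q a := by
      ext a; simp [Prod.ext_iff]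
    rw [he]; omega
  · have he : (Finset.univ.filter fun a =>
        ((decide (p a), decide (q a)) : Bool × Bool) = (true, false))
        = Finset.univ.filter fun a => p a ∧ ¬ q a := by
      ext a; simp [Prod.ext_iff]
    rw [he]; omega
  · have he : (Finset.univ.filter fun a =>
        ((decide (p a), decide (q a)) : Bool × Bool) = (true, true))
        = Finset.univ.filter fun a => p a ∧ q a := by
      ext a; simp [Prod.ext_iff]
    rw [he]; omega

def vT (n : ℕ) : Bool × Bool → ℕ
  | (true, true) => 2 ^ (n - 3)
  | (true, false) => 0
  | (false, true) => 0
  | (false, false) => 2 ^ n - 2 ^ (n - 3)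

def vF (n : ℕ) : Bool × Bool → ℕ
  | (true, true) => 0
  | (true, false) => 2 ^ (n - 3)
  | (false, true) => 2 ^ (n - 3)
  | (false, false) => 2 ^ n - 2 * 2 ^ (n - 3)

lemma cnt_eq {n : ℕ} (hn : 3 ≤ n) (s s' : Fin n → Bool)
    (S0 : {S : Finset (Fin n) // S.card = 3}) (b : Bool × Bool) :
    (Finset.univ.filter fun J : Fin n → Bool => gg s s' (S0, J) = b).card =
      if ∀ i ∈ S0.1, s i = s' i then vT n b else vF n b := by
  have h8 : 2 ^ (n - 3) * 8 = 2 ^ n := by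
    rw [show (8 : ℕ) = 2 ^ 3 from rfl, ← pow_add]
    congr 1; omega
  have hcard : Fintype.card (Fin n → Bool) = 2 ^ n := by simp
  have hP : (Finset.univ.filter fun J : Fin n → Bool => ∀ i ∈ S0.1, s i = J i).card
      = 2 ^ (n - 3) := by rw [cP s S0.1, S0.2]
  have hQ : (Finset.univ.filter fun J : Fin n → Bool => ∀ i ∈ S0.1, s' i = J i).card
      = 2 ^ (n - 3) := by rw [cP s' S0.1, S0.2]
  have hle : 2 ^ (n - 3) + 2 ^ (n - 3) ≤ Fintype.card (Fin n → Bool) := by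
    rw [hcard]; clear hP hQ; omega
  have hgg : (Finset.univ.filter fun J : Fin n → Bool => gg s s' (S0, J) = b)
      = Finset.univ.filter fun J : Fin n → Bool =>
          ((decide (∀ i ∈ S0.1, s i = J i), decide (∀ i ∈ S0.1, s' i = J i))
          : Bool × Bool) = b := by
    apply Finset.filter_congr
    intro J _
    simp [gg, violated]
  rw [hgg]
  split_ifs with h
  · have hpq := cPQ_agree s s' S0.1 h
    rw [S0.2] at hpq
    have := quad (fun J : Fin n → Bool => ∀ i ∈ S0.1, s i = J i)
      (fun J => ∀ i ∈ S0.1, s' i = J i) _ _ _ hP hQ hpq hle b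
    rw [this]
    rcases b with ⟨b1, b2⟩
    cases b1 <;> cases b2 <;> simp [vT] <;> (clear this hgg hpq hP hQ hle; omega)
  · have hpq := cPQ_disagree s s' S0.1 h
    have := quad (fun J : Fin n → Bool => ∀ i ∈ S0.1, s i = J i)
      (fun J => ∀ i ∈ S0.1, s' i = J i) _ _ _ hP hQ hpq hle b
    rw [this]
    rcases b with ⟨b1, b2⟩
    cases b1 <;> cases b2 <;> simp [vF] <;> (clear this hgg hpq hP hQ hle; omega)

lemma agree_count {n : ℕ} (s s' : Fin n → Bool) (d : ℕ)
    (hdiff : (Finset.univ.filter fun i : Fin n => s i ≠ s' i).card = d) :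
    (Finset.univ.filter fun S0 : {S : Finset (Fin n) // S.card = 3} =>
      ∀ i ∈ S0.1, s i = s' i).card = (n - d).choose 3 := by
  have key : (Finset.univ.filter fun S0 : {S : Finset (Fin n) // S.card = 3} =>
      ∀ i ∈ S0.1, s i = s' i).card
      = (Finset.powersetCard 3 ((Finset.univ.filter fun i : Fin n => s i ≠ s' i)ᶜ)).card := by
    refine Finset.card_bij' (fun S0 _ => S0.1)
      (fun S hS => ⟨S, (Finset.mem_powersetCard.1 hS).2⟩) ?hi ?hj ?left ?right
    case hi =>
      intro S0 hS0
      rw [Finset.mem_powersetCard]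
      refine ⟨fun i hi => ?_, S0.2⟩
      simp only [Finset.mem_compl, Finset.mem_filter, Finset.mem_univ, true_and, not_not]
      exact (Finset.mem_filter.1 hS0).2 i hi
    case hj =>
      intro S hS
      simp only [Finset.mem_filter, Finset.mem_univ, true_and]
      intro i hi
      have := (Finset.mem_powersetCard.1 hS).1 hi
      simpa using this
    case left => intro S0 _; rfl
    case right => intro S _; rfl
  rw [key, Finset.card_powersetCard, Finset.card_compl, hdiff, Fintype.card_fin]

lemma total_count (n : ℕ) : Fintype.card {S : Finset (Fin n) // S.card = 3} = n.choose 3 := by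
  rw [Fintype.card_subtype]
  have : (Finset.univ.filter fun S : Finset (Fin n) => S.card = 3)
      = Finset.powersetCard 3 Finset.univ := by
    ext S; simp [Finset.mem_powersetCard]
  rw [this, Finset.card_powersetCard, Finset.card_univ, Fintype.card_fin]

lemma Ncount {n : ℕ} (hn : 3 ≤ n) (s s' : Fin n → Bool) (d : ℕ)
    (hdiff : (Finset.univ.filter fun i : Fin n => s i ≠ s' i).card = d) (b : Bool × Bool) :
    (Finset.univ.filter fun c : Clause n => gg s s' c = b).card
      = (n - d).choose 3 * vT n b + (n.choose 3 - (n - d).choose 3) * vF n b := by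
  rw [Finset.card_eq_sum_card_fiberwise
    (f := fun c : Clause n => c.1) (t := Finset.univ) (fun x _ => Finset.mem_univ _)]
  have fib : ∀ S0 : {S : Finset (Fin n) // S.card = 3},
      ((Finset.univ.filter fun c : Clause n => gg s s' c = b).filter
        fun c => c.1 = S0).card
      = (Finset.univ.filter fun J : Fin n → Bool => gg s s' (S0, J) = b).card := by
    intro S0
    refine Finset.card_nbij' (fun c => c.2) (fun J => (S0, J)) ?hi ?hj ?left ?right
    case hi =>
      rintro ⟨S1, J⟩ hc
      simp only [Finset.mem_coe, Finset.mem_filter, Finset.mem_univ, true_and] at hc ⊢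
      rw [← hc.2]; exact hc.1
    case hj =>
      intro J hJ
      simp only [Finset.mem_coe, Finset.mem_filter, Finset.mem_univ, true_and] at hJ ⊢
      exact ⟨hJ, trivial⟩
    case left =>
      rintro ⟨S1, J⟩ hc
      simp only [Finset.mem_coe, Finset.mem_filter] at hc
      simp [← hc.2]
    case right => intro J _; rfl
  simp only [fib, cnt_eq hn s s']
  rw [Finset.sum_ite]
  simp only [Finset.sum_const, smul_eq_mul]
  rw [agree_count s s' d hdiff]
  congr 1
  congr 1
  have h1 := Finset.card_filter_add_card_filter_not
    (s := (Finset.univ : Finset {S : Finset (Fin n) // S.card = 3}))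
    (p := fun S0 => ∀ i ∈ S0.1, s i = s' i)
  rw [agree_count s s' d hdiff, Finset.card_univ, total_count] at h1
  omega


lemma L1 {α β : Type*} [Fintype α] [DecidableEq β] {m : ℕ} (g : α → β) (f : Fin m → β) :
    (Finset.univ.filter fun ω : Fin m → α => ∀ a, g (ω a) = f a).card
      = ∏ a, (Finset.univ.filter fun c => g c = f a).card := by
  have : (Finset.univ.filter fun ω : Fin m → α => ∀ a, g (ω a) = f a)
      = Fintype.piFinset (fun a => Finset.univ.filter fun c => g c = f a) := by
    ext ω; simp [Fintype.mem_piFinset]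
  rw [this, Fintype.card_piFinset]

lemma L2 {α β : Type*} [Fintype α] [DecidableEq β] [Fintype β] {m : ℕ} (g : α → β)
    (Q : (Fin m → β) → Prop) [DecidablePred Q] :
    (Finset.univ.filter fun ω : Fin m → α => Q (fun a => g (ω a))).card
      = ∑ f ∈ Finset.univ.filter Q, ∏ a, (Finset.univ.filter fun c => g c = f a).card := by
  rw [Finset.card_eq_sum_card_fiberwise
    (f := fun ω : Fin m → α => fun a => g (ω a)) (t := Finset.univ.filter Q)
    (fun ω hω => by simpa using (Finset.mem_filter.1 hω).2)]
  apply Finset.sum_congr rfl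
  intro f hf
  rw [← L1 g f]
  congr 1
  ext ω
  simp only [Finset.mem_filter, Finset.mem_univ, true_and, funext_iff]
  constructor
  · rintro ⟨-, h⟩; exact h
  · intro h
    refine ⟨?_, h⟩
    have : (fun a => g (ω a)) = f := funext h
    rw [this]
    exact (Finset.mem_filter.1 hf).2

lemma L4 {m : ℕ} (A : Finset (Fin m)) (k k' x : ℕ) (hA : A.card = k)
    (hxk : x ≤ k) (hxk' : x ≤ k') :
    ((Finset.powersetCard k' (Finset.univ : Finset (Fin m))).filter
      fun B => (A ∩ B).card = x).card
      = k.choose x * (m - k).choose (k' - x) := by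
  have key : ((Finset.powersetCard k' (Finset.univ : Finset (Fin m))).filter
      fun B => (A ∩ B).card = x).card
      = ((Finset.powersetCard x A) ×ˢ (Finset.powersetCard (k' - x) Aᶜ)).card := by
    refine Finset.card_bij' (fun B _ => (A ∩ B, B \ A)) (fun P _ => P.1 ∪ P.2) ?hi ?hj ?left ?right
    case hi =>
      intro B hB
      simp only [Finset.mem_filter, Finset.mem_powersetCard] at hB
      obtain ⟨⟨-, hBc⟩, hABx⟩ := hB
      simp only [Finset.mem_product, Finset.mem_powersetCard]
      refine ⟨⟨Finset.inter_subset_left, hABx⟩, fun a ha => ?_, ?_⟩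
      · simp only [Finset.mem_sdiff] at ha
        simp [ha.2]
      · have := Finset.card_sdiff_add_card_inter B A
        rw [Finset.inter_comm B A] at this
        omega
    case hj =>
      rintro ⟨C, D⟩ hP
      simp only [Finset.mem_product, Finset.mem_powersetCard] at hP
      obtain ⟨⟨hCA, hCx⟩, hDA, hDx⟩ := hP
      have hdisj : Disjoint C D := by
        apply Finset.disjoint_left.2
        intro a haC haD
        exact (Finset.mem_compl.1 (hDA haD)) (hCA haC)
      simp only [Finset.mem_filter, Finset.mem_powersetCard]
      have hAC : A ∩ (C ∪ D) = C := by
        ext a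
        simp only [Finset.mem_inter, Finset.mem_union]
        constructor
        · rintro ⟨haA, haC | haD⟩
          · exact haC
          · exact absurd haA (Finset.mem_compl.1 (hDA haD))
        · intro haC; exact ⟨hCA haC, Or.inl haC⟩
      refine ⟨⟨Finset.subset_univ _, ?_⟩, by rw [hAC, hCx]⟩
      rw [Finset.card_union_of_disjoint hdisj, hCx, hDx]
      omega
    case left =>
      intro B hB
      ext a
      simp only [Finset.mem_union, Finset.mem_inter, Finset.mem_sdiff]
      tauto
    case right =>
      rintro ⟨C, D⟩ hP
      simp only [Finset.mem_product, Finset.mem_powersetCard] at hP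
      obtain ⟨⟨hCA, hCx⟩, hDA, hDx⟩ := hP
      have h1 : A ∩ (C ∪ D) = C := by
        ext a
        simp only [Finset.mem_inter, Finset.mem_union]
        constructor
        · rintro ⟨haA, haC | haD⟩
          · exact haC
          · exact absurd haA (Finset.mem_compl.1 (hDA haD))
        · intro haC; exact ⟨hCA haC, Or.inl haC⟩
      have h2 : (C ∪ D) \ A = D := by
        ext a
        simp only [Finset.mem_sdiff, Finset.mem_union]
        constructor
        · rintro ⟨haC | haD, haA⟩
          · exact absurd (hCA haC) haA
          · exact haD
        · intro haD; exact ⟨Or.inr haD, Finset.mem_compl.1 (hDA haD)⟩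
      show (A ∩ (C ∪ D), (C ∪ D) \ A) = (C, D)
      rw [h1, h2]
  rw [key, Finset.card_product, Finset.card_powersetCard, Finset.card_powersetCard,
    Finset.card_compl, hA, Fintype.card_fin]

lemma L6 {m : ℕ} (A B : Finset (Fin m)) (ν : Bool × Bool → ℕ) :
    (∏ a, ν (decide (a ∈ A), decide (a ∈ B)))
      = ν (true, true) ^ (A ∩ B).card * ν (true, false) ^ (A \ B).card
        * ν (false, true) ^ (B \ A).card * ν (false, false) ^ ((A ∪ B)ᶜ).card := by
  classical
  rw [← Finset.prod_filter_mul_prod_filter_not Finset.univ (· ∈ A)]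
  have e1 : Finset.univ.filter (· ∈ A) = A := by ext a; simp
  have e2 : Finset.univ.filter (fun a => ¬ a ∈ A) = Aᶜ := by ext a; simp
  rw [e1, e2,
    ← Finset.prod_filter_mul_prod_filter_not A (· ∈ B),
    ← Finset.prod_filter_mul_prod_filter_not Aᶜ (· ∈ B)]
  have e3 : A.filter (· ∈ B) = A ∩ B := by ext a; simp
  have e4 : A.filter (fun a => ¬ a ∈ B) = A \ B := by ext a; simp [Finset.mem_sdiff]
  have e5 : Aᶜ.filter (· ∈ B) = B \ A := by ext a; simp [Finset.mem_sdiff, and_comm]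
  have e6 : Aᶜ.filter (fun a => ¬ a ∈ B) = (A ∪ B)ᶜ := by ext a; simp [not_or]
  rw [e3, e4, e5, e6]
  have c1 : ∏ a ∈ A ∩ B, ν (decide (a ∈ A), decide (a ∈ B)) = ν (true, true) ^ (A ∩ B).card := by
    rw [Finset.prod_congr rfl (fun a ha => ?_), Finset.prod_const]
    have := Finset.mem_inter.1 ha
    simp [this.1, this.2]
  have c2 : ∏ a ∈ A \ B, ν (decide (a ∈ A), decide (a ∈ B)) = ν (true, false) ^ (A \ B).card := by
    rw [Finset.prod_congr rfl (fun a ha => ?_), Finset.prod_const]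
    have := Finset.mem_sdiff.1 ha
    simp [this.1, this.2]
  have c3 : ∏ a ∈ B \ A, ν (decide (a ∈ A), decide (a ∈ B)) = ν (false, true) ^ (B \ A).card := by
    rw [Finset.prod_congr rfl (fun a ha => ?_), Finset.prod_const]
    have := Finset.mem_sdiff.1 ha
    simp [this.1, this.2]
  have c4 : ∏ a ∈ (A ∪ B)ᶜ, ν (decide (a ∈ A), decide (a ∈ B))
      = ν (false, false) ^ ((A ∪ B)ᶜ).card := by
    rw [Finset.prod_congr rfl (fun a ha => ?_), Finset.prod_const]
    have := Finset.mem_compl.1 ha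
    rw [Finset.mem_union] at this
    push_neg at this
    simp [this.1, this.2]
  rw [c1, c2, c3, c4]; ring

lemma joint_count {α : Type*} [Fintype α] (g : α → Bool × Bool) (m k k' : ℕ)
    (hk : k ≤ m) (hk' : k' ≤ m) :
    (Finset.univ.filter fun ω : Fin m → α =>
        (Finset.univ.filter fun a => (g (ω a)).1 = true).card = k ∧
        (Finset.univ.filter fun a => (g (ω a)).2 = true).card = k').card
      = m.choose k * ∑ x ∈ Finset.Icc (max (k + k' - m) 0) (min k k'),
          (k.choose x * (m - k).choose (k' - x)) *
            ((Finset.univ.filter fun c => g c = (true, true)).card ^ x *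
             (Finset.univ.filter fun c => g c = (true, false)).card ^ (k - x) *
             (Finset.univ.filter fun c => g c = (false, true)).card ^ (k' - x) *
             (Finset.univ.filter fun c => g c = (false, false)).card ^ (m - k - (k' - x))) := by
  classical
  set N : Bool × Bool → ℕ := fun b => (Finset.univ.filter fun c => g c = b).card with hN
  have e0 : (Finset.univ.filter fun ω : Fin m → α =>
        (Finset.univ.filter fun a => (g (ω a)).1 = true).card = k ∧
        (Finset.univ.filter fun a => (g (ω a)).2 = true).card = k')
      = Finset.univ.filter fun ω : Fin m → α =>
          (fun f : Fin m → Bool × Bool =>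
            (Finset.univ.filter fun a => (f a).1 = true).card = k ∧
            (Finset.univ.filter fun a => (f a).2 = true).card = k') (fun a => g (ω a)) :=
    Finset.filter_congr (fun ω _ => Iff.rfl)
  rw [e0, L2 g (fun f : Fin m → Bool × Bool =>
    (Finset.univ.filter fun a => (f a).1 = true).card = k ∧
    (Finset.univ.filter fun a => (f a).2 = true).card = k')]
  -- reindex by pairs of sets
  have e1 : ∀ P : Finset (Fin m) × Finset (Fin m), ∀ a : Fin m,
      (a ∈ Finset.univ.filter fun a' => (decide (a' ∈ P.1), decide (a' ∈ P.2)).1 = true) ↔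
        a ∈ P.1 := by intro P a; simp
  have key : ∑ f ∈ Finset.univ.filter (fun f : Fin m → Bool × Bool =>
        (Finset.univ.filter fun a => (f a).1 = true).card = k ∧
        (Finset.univ.filter fun a => (f a).2 = true).card = k'),
        ∏ a, N (f a)
      = ∑ P ∈ (Finset.powersetCard k (Finset.univ : Finset (Fin m))) ×ˢ
            (Finset.powersetCard k' (Finset.univ : Finset (Fin m))),
          ∏ a, N (decide (a ∈ P.1), decide (a ∈ P.2)) := by
    refine Finset.sum_nbij'
      (fun f => (Finset.univ.filter fun a => (f a).1 = true,
                 Finset.univ.filter fun a => (f a).2 = true))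
      (fun P => fun a => (decide (a ∈ P.1), decide (a ∈ P.2)))
      ?hi ?hj ?left ?right ?val
    case hi =>
      intro f hf
      simp only [Finset.mem_filter, Finset.mem_univ, true_and] at hf
      simp only [Finset.mem_product, Finset.mem_powersetCard]
      exact ⟨⟨Finset.subset_univ _, hf.1⟩, Finset.subset_univ _, hf.2⟩
    case hj =>
      intro P hP
      simp only [Finset.mem_product, Finset.mem_powersetCard] at hP
      simp only [Finset.mem_filter, Finset.mem_univ, true_and]
      constructor
      · have : (Finset.univ.filter fun a => ((decide (a ∈ P.1), decide (a ∈ P.2)).1 = true))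
            = P.1 := by ext a; simp
        rw [this]; exact hP.1.2
      · have : (Finset.univ.filter fun a => ((decide (a ∈ P.1), decide (a ∈ P.2)).2 = true))
            = P.2 := by ext a; simp
        rw [this]; exact hP.2.2
    case left =>
      intro f _
      funext a
      simp
    case right =>
      intro P _
      have h1 : (Finset.univ.filter fun a => (decide (a ∈ P.1) : Bool) = true) = P.1 := by
        ext a; simp
      have h2 : (Finset.univ.filter fun a => (decide (a ∈ P.2) : Bool) = true) = P.2 := by
        ext a; simp
      exact Prod.ext h1 h2
    case val =>
      intro f _
      apply Finset.prod_congr rfl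
      intro a _
      congr 1
      refine Prod.ext ?_ ?_ <;> simp
  rw [key, Finset.sum_product]
  have hm : Fintype.card (Fin m) = m := Fintype.card_fin m
  have inner : ∀ A ∈ Finset.powersetCard k (Finset.univ : Finset (Fin m)),
      (∑ B ∈ Finset.powersetCard k' (Finset.univ : Finset (Fin m)),
        ∏ a, N (decide (a ∈ A), decide (a ∈ B)))
      = ∑ x ∈ Finset.Icc (max (k + k' - m) 0) (min k k'),
          (k.choose x * (m - k).choose (k' - x)) *
            (N (true, true) ^ x * N (true, false) ^ (k - x) * N (false, true) ^ (k' - x) *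
             N (false, false) ^ (m - k - (k' - x))) := by
    intro A hA
    have hAk : A.card = k := (Finset.mem_powersetCard.1 hA).2
    rw [← Finset.sum_fiberwise_of_maps_to (g := fun B => (A ∩ B).card)
      (t := Finset.Icc (max (k + k' - m) 0) (min k k')) ?maps]
    case maps =>
      intro B hB
      have hBk : B.card = k' := (Finset.mem_powersetCard.1 hB).2
      have h1 : (A ∩ B).card ≤ k := hAk ▸ Finset.card_le_card Finset.inter_subset_left
      have h2 : (A ∩ B).card ≤ k' := hBk ▸ Finset.card_le_card Finset.inter_subset_right
      have h3 : (A ∪ B).card + (A ∩ B).card = k + k' := by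
        rw [Finset.card_union_add_card_inter, hAk, hBk]
      have h4 : (A ∪ B).card ≤ m := by
        have := Finset.card_le_univ (A ∪ B)
        rwa [hm] at this
      rw [Finset.mem_Icc]
      show max (k + k' - m) 0 ≤ (A ∩ B).card ∧ (A ∩ B).card ≤ min k k'
      clear * - h1 h2 h3 h4
      omega
    apply Finset.sum_congr rfl
    intro x hx
    rw [Finset.mem_Icc] at hx
    have hx1 : x ≤ k := le_trans hx.2 (min_le_left _ _)
    have hx2 : x ≤ k' := le_trans hx.2 (min_le_right _ _)
    have hx3 : k + k' - m ≤ x := le_trans (le_max_left _ _) hx.1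
    have step : ∀ B ∈ (Finset.powersetCard k' (Finset.univ : Finset (Fin m))).filter
        (fun B => (A ∩ B).card = x),
        (∏ a, N (decide (a ∈ A), decide (a ∈ B)))
          = N (true, true) ^ x * N (true, false) ^ (k - x) * N (false, true) ^ (k' - x) *
             N (false, false) ^ (m - k - (k' - x)) := by
      intro B hB
      rw [Finset.mem_filter] at hB
      have hBk : B.card = k' := (Finset.mem_powersetCard.1 hB.1).2
      have hABx : (A ∩ B).card = x := hB.2
      have hs1 : (A \ B).card = k - x := by
        have := Finset.card_sdiff_add_card_inter A B
        clear * - this hAk hABx hx1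
        omega
      have hs2 : (B \ A).card = k' - x := by
        have := Finset.card_sdiff_add_card_inter B A
        rw [Finset.inter_comm B A] at this
        clear * - this hBk hABx hx2
        omega
      have hs3 : ((A ∪ B)ᶜ).card = m - k - (k' - x) := by
        have h3 : (A ∪ B).card + (A ∩ B).card = k + k' := by
          rw [Finset.card_union_add_card_inter, hAk, hBk]
        have := Finset.card_compl (A ∪ B)
        rw [hm] at this
        clear * - this h3 hABx hx1 hx2 hx3 hk hk'
        omega
      rw [L6 A B N, hABx, hs1, hs2, hs3]
    rw [Finset.sum_congr rfl step, Finset.sum_const, L4 A k k' x hAk hx1 hx2, smul_eq_mul]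
  rw [Finset.sum_congr rfl inner, Finset.sum_const, Finset.card_powersetCard,
    Finset.card_univ, hm, smul_eq_mul]

set_option maxHeartbeats 1000000 in
/-- for assignments `s, s'` differing in exactly `d` coordinates, the joint
distribution of the energies of a random 3-SAT instance with `m` clauses is
`P(E(s)=k, E(s')=k') = B(k|m,1/8)·∑_x B(x|k,p1)·B(k'−x|m−k,p0)`. -/
theorem stmt_17 (n m : ℕ) (hn : 3 ≤ n) (hm : 1 ≤ m) (s s' : Fin n → Bool) (d : ℕ)
    (hd1 : 1 ≤ d) (hdn : d ≤ n)
    (hdiff : (Finset.univ.filter fun i : Fin n => s i ≠ s' i).card = d)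
    (k k' : ℕ) (hk : k ≤ m) (hk' : k' ≤ m) :
    unifProb (fun ω : Inst n m => energy s ω = k ∧ energy s' ω = k') =
      binomProb k m (1 / 8) *
        ∑ x ∈ Finset.Icc (max (k + k' - m) 0) (min k k'),
          binomProb x k (((n - d).choose 3 : ℝ) / (n.choose 3 : ℝ)) *
            binomProb (k' - x) (m - k)
              ((1 - ((n - d).choose 3 : ℝ) / (n.choose 3 : ℝ)) / 7) := by
  classical
  have hc3 : 0 < n.choose 3 := Nat.choose_pos hn
  have hc13 : (n - d).choose 3 ≤ n.choose 3 := Nat.choose_le_choose 3 (Nat.sub_le n d)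
  have h8 : (2:ℕ) ^ (n - 3) * 8 = 2 ^ n := by
    rw [show (8:ℕ) = 2 ^ 3 from rfl, ← pow_add]; congr 1; omega
  -- count values
  have Ntt : (Finset.univ.filter fun c : Clause n => gg s s' c = (true, true)).card
      = (n - d).choose 3 * 2 ^ (n - 3) := by
    rw [Ncount hn s s' d hdiff (true, true)]; simp [vT, vF]
  have Ntf : (Finset.univ.filter fun c : Clause n => gg s s' c = (true, false)).card
      = (n.choose 3 - (n - d).choose 3) * 2 ^ (n - 3) := by
    rw [Ncount hn s s' d hdiff (true, false)]; simp [vT, vF]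
  have Nft : (Finset.univ.filter fun c : Clause n => gg s s' c = (false, true)).card
      = (n.choose 3 - (n - d).choose 3) * 2 ^ (n - 3) := by
    rw [Ncount hn s s' d hdiff (false, true)]; simp [vT, vF]
  have Nff : (Finset.univ.filter fun c : Clause n => gg s s' c = (false, false)).card
      = (n - d).choose 3 * (2 ^ n - 2 ^ (n - 3))
        + (n.choose 3 - (n - d).choose 3) * (2 ^ n - 2 * 2 ^ (n - 3)) := by
    rw [Ncount hn s s' d hdiff (false, false)]; simp [vT, vF]
  -- bridge from energy to the abstract joint count
  have hfilter : (Finset.univ.filter fun ω : Inst n m => energy s ω = k ∧ energy s' ω = k')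
      = Finset.univ.filter fun ω : Inst n m =>
          (Finset.univ.filter fun a => (gg s s' (ω a)).1 = true).card = k ∧
          (Finset.univ.filter fun a => (gg s s' (ω a)).2 = true).card = k' := by
    apply Finset.filter_congr
    intro ω _
    have hE : energy s ω = (Finset.univ.filter fun a => (gg s s' (ω a)).1 = true).card := by
      unfold energy; congr 1
      apply Finset.filter_congr
      intro a _
      simp [gg]
    have hE' : energy s' ω = (Finset.univ.filter fun a => (gg s s' (ω a)).2 = true).card := by
      unfold energy; congr 1
      apply Finset.filter_congr
      intro a _
      simp [gg]
    rw [hE, hE']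
  have hcard : Fintype.card (Inst n m) = (n.choose 3 * 2 ^ n) ^ m := by
    rw [show Fintype.card (Inst n m) = (Fintype.card (Clause n)) ^ m by
      simp [Inst, Fintype.card_fun]]
    congr 1
    rw [show Fintype.card (Clause n)
        = Fintype.card {S : Finset (Fin n) // S.card = 3} * Fintype.card (Fin n → Bool) from
      Fintype.card_prod _ _, total_count]
    simp
  rw [unifProb, hfilter, joint_count (gg s s') m k k' hk hk', Ntt, Ntf, Nft, Nff, hcard]
  -- now pure real arithmetic
  have hs1 : (2:ℕ) ^ (n - 3) ≤ 2 ^ n := by omega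
  have hs2 : 2 * (2:ℕ) ^ (n - 3) ≤ 2 ^ n := by omega
  push_cast [Nat.cast_sub hc13, Nat.cast_sub hs1, Nat.cast_sub hs2, Finset.mul_sum]
  rw [Finset.sum_div]
  apply Finset.sum_congr rfl
  intro x hx
  rw [Finset.mem_Icc] at hx
  have hx1 : x ≤ k := le_trans hx.2 (min_le_left _ _)
  have hx2 : x ≤ k' := le_trans hx.2 (min_le_right _ _)
  have hx3 : k + k' - m ≤ x := le_trans (le_max_left _ _) hx.1
  set c1 : ℝ := ((n - d).choose 3 : ℝ) with hc1def
  set c3 : ℝ := (n.choose 3 : ℝ) with hc3def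
  set E : ℝ := (2:ℝ) ^ (n - 3) with hEdef
  have hc3R : (0:ℝ) < c3 := by rw [hc3def]; exact_mod_cast hc3
  have hER : (0:ℝ) < E := by positivity
  have h8R : (2:ℝ) ^ n = 8 * E := by
    rw [hEdef]
    have : ((2:ℕ) ^ (n-3) * 8 : ℝ) = ((2:ℕ) ^ n : ℝ) := by exact_mod_cast congrArg (Nat.cast (R := ℝ)) h8
    push_cast at this
    linarith
  set q1 : ℝ := c1 / c3 with hq1def
  set Rt : ℝ := c3 * (8 * E) with hRtdef
  have hRt : (0:ℝ) < Rt := by positivity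
  have base1 : c1 * E = q1 / 8 * Rt := by
    rw [hq1def, hRtdef]; field_simp
  have base2 : (c3 - c1) * E = (1 - q1) / 8 * Rt := by
    rw [hq1def, hRtdef]; field_simp
  have base4 : c1 * (8 * E - E) + (c3 - c1) * (8 * E - 2 * E)
      = (6 + q1) / 8 * Rt := by
    rw [hq1def, hRtdef]; field_simp; ring
  rw [h8R, base1, base2, base4]
  have hRtm : (c3 * (8 * E)) ^ m
      = Rt ^ x * Rt ^ (k - x) * Rt ^ (k' - x) * Rt ^ (m - k - (k' - x)) := by
    rw [← hRtdef, ← pow_add, ← pow_add, ← pow_add]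
    congr 1
    omega
  clear_value E c1 c3 q1 Rt
  rw [hRtm]
  have hRne : (Rt ^ x * Rt ^ (k - x) * Rt ^ (k' - x) * Rt ^ (m - k - (k' - x)) : ℝ) ≠ 0 := by
    positivity
  rw [div_eq_iff hRne]
  simp only [binomProb]
  rw [show (1 - (1:ℝ)/8) = 7/8 by norm_num]
  rw [show ((1:ℝ)/8) ^ k = (1/8) ^ x * (1/8) ^ (k - x) by rw [← pow_add]; congr 1; omega]
  rw [show ((7:ℝ)/8) ^ (m - k) = (7/8) ^ (k' - x) * (7/8) ^ (m - k - (k' - x)) by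
    rw [← pow_add]; congr 1; omega]
  rw [show (q1/8*Rt)^x = (1/8)^x * q1^x * Rt^x by
    rw [← mul_pow, ← mul_pow]; congr 1; ring]
  rw [show ((1-q1)/8*Rt)^(k-x) = (1/8)^(k-x) * (1-q1)^(k-x) * Rt^(k-x) by
    rw [← mul_pow, ← mul_pow]; congr 1; ring]
  rw [show ((1-q1)/8*Rt)^(k'-x) = (7/8)^(k'-x) * ((1-q1)/7)^(k'-x) * Rt^(k'-x) by
    rw [← mul_pow, ← mul_pow]; congr 1; ring]
  rw [show ((6+q1)/8*Rt)^(m-k-(k'-x))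
      = (7/8)^(m-k-(k'-x)) * (1-(1-q1)/7)^(m-k-(k'-x)) * Rt^(m-k-(k'-x)) by
    rw [← mul_pow, ← mul_pow]; congr 1; ring]
  ring
end
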